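/- arXiv:cs/0607024 — 2 statements merged into one kernel-verified Lean document; each statement's English description precedes it below -/
import Mathlib

section
/- Let C be a binary linear [n,k,d] code. The matrix H whose rows are all nonzero codewords of the dual code C^⊥ of weight at most k+1 has rank n-k, hence is a parity-check matrix for C. -/
open Finset

variable {ι : Type*}

/-- Support of a binary word. -/
def supp [Fintype ι] (x : ι → ZMod 2) : Finset ι :=
  Finset.univ.filter (fun j => x j ≠ 0)

/-- Hamming weight of a binary word. -/
def wt [Fintype ι] (x : ι → ZMod 2) : ℕ := (supp x).card

/-- `S` is a stopping set for the matrix `H` if no row of the column-submatrix `H_S`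
has weight exactly one. -/
def IsStoppingSet {ρ : Type*} (H : Matrix ρ ι (ZMod 2)) (S : Finset ι) : Prop :=
  ∀ i : ρ, (S.filter (fun j => H i j = 1)).card ≠ 1

/-- The dual code of a binary linear code. -/
def dualCode [Fintype ι] (C : Submodule (ZMod 2) (ι → ZMod 2)) :
    Submodule (ZMod 2) (ι → ZMod 2) where
  carrier := {y | ∀ x ∈ C, ∑ j, y j * x j = 0}
  add_mem' := by
    intro a b ha hb x hx
    simp only [Set.mem_setOf_eq] at *
    simp [Pi.add_apply, add_mul, Finset.sum_add_distrib, ha x hx, hb x hx]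
  zero_mem' := by intro x hx; simp
  smul_mem' := by
    intro c a ha x hx
    simp only [Set.mem_setOf_eq] at *
    simp [Pi.smul_apply, smul_eq_mul, mul_assoc, ← Finset.mul_sum, ha x hx]

/-- The complete parity-check matrix of `C`: rows indexed by all dual codewords. -/
def Hstar [Fintype ι] (C : Submodule (ZMod 2) (ι → ZMod 2)) :
    Matrix (dualCode C) ι (ZMod 2) := fun y j => (y : ι → ZMod 2) j

/-- A code is minimum stopping if every stopping set of its complete parity-check
matrix is the support of a codeword. -/
def MinStopping [Fintype ι] (C : Submodule (ZMod 2) (ι → ZMod 2)) : Prop :=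
  ∀ S : Finset ι, IsStoppingSet (Hstar C) S → ∃ c ∈ C, supp c = S

/-- `H` is a parity-check matrix for `C` : the words checked by all rows of `H`
are exactly the codewords of `C`. -/
def IsPCM {ρ : Type*} [Fintype ι] (C : Submodule (ZMod 2) (ι → ZMod 2))
    (H : Matrix ρ ι (ZMod 2)) : Prop :=
  ∀ x : ι → ZMod 2, x ∈ C ↔ ∀ i : ρ, ∑ j, H i j * x j = 0

/-!
A subspace `D ≤ K^n` of dimension `m` is spanned by its nonzero vectors of weight at most
`n - m + 1`. If `y ∈ D` is heavier, its support minus one coordinate `j` has more than `n - m`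
elements, so `D` contains a nonzero `u` supported there. Killing a coordinate `i` of `u` by
`y - (y i / u i) • u` writes `y` as a sum of two vectors of `D` with strictly smaller support,
and induction on the weight finishes. For `D = C^⊥` we have `m = n - k`, so the bound is `k + 1`;
since `C^⊥⊥ = C`, any matrix whose rows span `C^⊥` is a parity-check matrix of `C`.
-/

section HammingSpan

variable {K : Type*} [Field K] [Fintype ι]

theorem Submodule.exists_ne_zero_mem_support_subset (D : Submodule K (ι → K)) (T : Finset ι)
    (h : Fintype.card ι < #T + Module.finrank K D) :
    ∃ u ∈ D, u ≠ 0 ∧ ∀ i ∉ T, u i = 0 := by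
  classical
  let restrict : D →ₗ[K] ({i // i ∉ T} → K) :=
    (LinearMap.funLeft K K Subtype.val).comp D.subtype
  have hdim : Module.finrank K ({i // i ∉ T} → K) < Module.finrank K D := by
    rw [Module.finrank_fintype_fun_eq_card, Fintype.card_subtype_compl, Fintype.card_coe]
    have := T.card_le_univ
    omega
  obtain ⟨⟨u, huD⟩, hker, hu0⟩ :=
    Submodule.exists_mem_ne_zero_of_ne_bot (restrict.ker_ne_bot_of_finrank_lt hdim)
  exact ⟨u, huD, by simpa using hu0, fun i hi => congr_fun hker ⟨i, hi⟩⟩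

variable [DecidableEq K]

theorem hammingNorm_lt_of_support_ssubset {v y : ι → K} (hsub : ∀ i, v i ≠ 0 → y i ≠ 0)
    {j : ι} (hyj : y j ≠ 0) (hvj : v j = 0) : hammingNorm v < hammingNorm y :=
  Finset.card_lt_card <| (Finset.ssubset_iff_of_subset fun i => by simpa using hsub i).2
    ⟨j, by simpa using hyj, by simpa using hvj⟩

theorem Submodule.span_hammingNorm_le_eq (D : Submodule K (ι → K)) {w : ℕ}
    (hw : Fintype.card ι < w + Module.finrank K D) :
    Submodule.span K {u | u ∈ D ∧ u ≠ 0 ∧ hammingNorm u ≤ w} = D := by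
  classical
  refine le_antisymm (Submodule.span_le.2 fun u hu => hu.1) fun y hy => ?_
  induction hm : hammingNorm y using Nat.strong_induction_on generalizing y with
  | _ m ih =>
  by_cases hyw : m ≤ w
  · by_cases hy0 : y = 0
    · subst hy0; exact Submodule.zero_mem _
    · exact Submodule.subset_span ⟨hy, hy0, hm ▸ hyw⟩
  obtain ⟨j, hyj⟩ : ∃ j, y j ≠ 0 :=
    Function.ne_iff.1 (hammingNorm_ne_zero_iff.1 (by omega : hammingNorm y ≠ 0))
  set S : Finset ι := {i | y i ≠ 0}
  have hjS : j ∈ S := by simpa [S] using hyj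
  obtain ⟨u, huD, hu0, hu⟩ := D.exists_ne_zero_mem_support_subset (S.erase j) (by
    rw [Finset.card_erase_of_mem hjS, show #S = m from hm]; omega)
  have hu' : ∀ i, u i ≠ 0 → y i ≠ 0 ∧ i ≠ j := fun i hi => by
    by_contra h; exact hi (hu i (by simp [S] at h ⊢; tauto))
  obtain ⟨i, hui⟩ : ∃ i, u i ≠ 0 := Function.ne_iff.1 hu0
  set c := y i / u i
  have hsplit : y = (y - c • u) + c • u := (sub_add_cancel y _).symm
  rw [hsplit]
  refine Submodule.add_mem _ (ih _ ?_ _ (D.sub_mem hy (D.smul_mem c huD)) rfl)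
    (Submodule.smul_mem _ _ (ih _ ?_ _ huD rfl))
  · refine hm ▸ hammingNorm_lt_of_support_ssubset (fun l hl => ?_) (hu' i hui).1 ?_
    · by_contra hyl
      have hul : u l = 0 := by_contra fun h => (hu' l h).1 hyl
      simp [hyl, hul] at hl
    · simp [c, hui]
  · exact hm ▸ hammingNorm_lt_of_support_ssubset (fun l hl => (hu' l hl).1) hyj
      (by by_contra h; exact (hu' j h).2 rfl)

end HammingSpan

section DualCode

variable [Fintype ι] (C : Submodule (ZMod 2) (ι → ZMod 2))

theorem mem_dualCode_iff {y : ι → ZMod 2} : y ∈ dualCode C ↔ ∀ x ∈ C, y ⬝ᵥ x = 0 := Iff.rfl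

theorem dualCode_eq_comap_dualAnnihilator [DecidableEq ι] :
    dualCode C = C.dualAnnihilator.comap (dotProductEquiv (ZMod 2) ι : _ →ₗ[ZMod 2] _) := by
  ext y
  simp [mem_dualCode_iff, Submodule.mem_dualAnnihilator]

theorem finrank_dualCode_add_finrank :
    Module.finrank (ZMod 2) (dualCode C) + Module.finrank (ZMod 2) C = Fintype.card ι := by
  classical
  rw [dualCode_eq_comap_dualAnnihilator, Submodule.comap_equiv_eq_map_symm,
    LinearEquiv.finrank_map_eq, add_comm, Subspace.finrank_add_finrank_dualAnnihilator_eq,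
    Module.finrank_fintype_fun_eq_card]

theorem dualCode_dualCode : dualCode (dualCode C) = C := by
  refine (Submodule.eq_of_le_of_finrank_eq (fun x hx => ?_) ?_).symm
  · exact (mem_dualCode_iff _).2 fun y hy => by rw [dotProduct_comm]; exact hy x hx
  · have := finrank_dualCode_add_finrank C
    have := finrank_dualCode_add_finrank (dualCode C)
    omega

theorem isPCM_of_span_eq {ρ : Type*} (H : Matrix ρ ι (ZMod 2))
    (hH : Submodule.span (ZMod 2) (Set.range H) = dualCode C) : IsPCM C H := by
  classical
  intro x
  rw [← dualCode_dualCode C, mem_dualCode_iff, ← hH]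
  refine ⟨fun h i => ?_, fun h y hy => ?_⟩
  · show H i ⬝ᵥ x = 0
    rw [dotProduct_comm]
    exact h _ (Submodule.subset_span ⟨i, rfl⟩)
  · refine Submodule.span_le (p := LinearMap.ker (dotProductEquiv (ZMod 2) ι x)) |>.2 ?_ hy
    rintro _ ⟨i, rfl⟩
    show x ⬝ᵥ H i = 0
    rw [dotProduct_comm]
    exact h i

end DualCode

theorem wt_eq_hammingNorm [Fintype ι] (x : ι → ZMod 2) : wt x = hammingNorm x := rfl

/-- The matrix whose rows are all nonzero dual codewords of weight at most k+1 has rank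
n-k, hence is a parity-check matrix for C. -/
theorem stmt_10 {n k : ℕ} (C : Submodule (ZMod 2) (Fin n → ZMod 2))
    (hk : Module.finrank (ZMod 2) C = k)
    (H : Matrix {y : Fin n → ZMod 2 // y ∈ dualCode C ∧ y ≠ 0 ∧ wt y ≤ k + 1}
        (Fin n) (ZMod 2))
    (hrows : ∀ y, H y = y.1) :
    H.rank = n - k ∧ IsPCM C H := by
  have hdim : Module.finrank (ZMod 2) (dualCode C) = n - k := by
    have := finrank_dualCode_add_finrank C
    simp only [Fintype.card_fin] at this
    omega
  have hspan : Submodule.span (ZMod 2) (Set.range H) = dualCode C := by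
    rw [show H = Subtype.val from funext hrows, Subtype.range_coe_subtype]
    simp only [wt_eq_hammingNorm]
    exact (dualCode C).span_hammingNorm_le_eq (by rw [hdim, Fintype.card_fin]; omega)
  refine ⟨?_, isPCM_of_span_eq C H hspan⟩
  rw [Matrix.rank_eq_finrank_span_row, Matrix.row, hspan, hdim]
end

section
/- For any binary linear [n,k,d] code C with complete parity-check matrix H*, the number S*_i of stopping sets of size i for H* equals the number A_i of codewords of weight i, for all 0 ≤ i ≤ min(⌈3d/2⌉ - 1, n). -/
open Finset

variable {ι : Type*}

/-!
Every point `j` of a stopping set `S` of `H*` lies in the support of a codeword supported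
inside `S`: otherwise evaluation at `j` annihilates `C ⊓ {x | supp x ⊆ S}`, hence splits as a
dual word plus a functional killing the words supported on `S`, and that dual word meets `S`
exactly in `j`. Two distinct nonzero codewords `c, c'` supported in `S` give
`wt c + wt c' + wt (c + c') = 2 |supp c ∪ supp c'| ≤ 2 |S|`, so `3d ≤ 2 |S|`. Hence every
stopping set of size `< ⌈3d/2⌉` is the support of a codeword, and `supp` is a bijection from
the codewords of weight `i` onto the stopping sets of size `i`.
-/

section Binary

variable [Fintype ι]

@[simp]
lemma mem_supp {x : ι → ZMod 2} {j : ι} : j ∈ supp x ↔ x j ≠ 0 := by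
  simp [supp]

lemma ne_zero_of_mem_supp {x : ι → ZMod 2} {j : ι} (hj : j ∈ supp x) : x ≠ 0 := by
  rintro rfl
  simp at hj

lemma supp_injective : Function.Injective (supp : (ι → ZMod 2) → Finset ι) := by
  intro x y h
  funext k
  have hk : x k ≠ 0 ↔ y k ≠ 0 := by rw [← mem_supp, ← mem_supp, h]
  revert hk; generalize x k = a; generalize y k = b; revert a b; decide

lemma supp_add [DecidableEq ι] (x y : ι → ZMod 2) :
    supp (x + y) = (supp x ∪ supp y) \ (supp x ∩ supp y) := by
  ext k
  simp only [mem_sdiff, mem_union, mem_inter, mem_supp, Pi.add_apply]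
  generalize x k = a; generalize y k = b; revert a b; decide

lemma wt_add_wt_add_wt_add [DecidableEq ι] (x y : ι → ZMod 2) :
    wt x + wt y + wt (x + y) = 2 * (supp x ∪ supp y).card := by
  have hunion := card_union_add_card_inter (supp x) (supp y)
  have hsdiff := card_sdiff_add_card_eq_card
    (inter_subset_left.trans subset_union_left : supp x ∩ supp y ⊆ supp x ∪ supp y)
  rw [wt, wt, wt, supp_add]
  omega

lemma exists_mem_dualCode_filter_eq_singleton [DecidableEq ι]
    {C : Submodule (ZMod 2) (ι → ZMod 2)} {S : Finset ι} {j : ι} (hj : j ∈ S)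
    (hC : ∀ c ∈ C, supp c ⊆ S → c j = 0) :
    ∃ y ∈ dualCode C, S.filter (fun k => y k = 1) = {j} := by
  let V : Submodule (ZMod 2) (ι → ZMod 2) := Submodule.pi {k | k ∉ S} fun _ => ⊥
  have hproj : LinearMap.proj j ∈ (C ⊓ V).dualAnnihilator := by
    rw [Submodule.mem_dualAnnihilator]
    rintro c ⟨hc, hcV⟩
    refine hC c hc fun k hk => ?_
    by_contra hkS
    exact mem_supp.mp hk (hcV k hkS)
  rw [Subspace.dualAnnihilator_inf_eq, Submodule.mem_sup] at hproj
  obtain ⟨f, hf, g, hg, hfg⟩ := hproj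
  let e : ι → ι → ZMod 2 := fun k m => if k = m then 1 else 0
  refine ⟨fun k => f (e k), fun x hx => ?_, ?_⟩
  · rw [← (Submodule.mem_dualAnnihilator f).mp hf x hx, LinearMap.pi_apply_eq_sum_univ f x]
    simp only [smul_eq_mul, mul_comm, e]
  · ext k
    have hf_e : ∀ k ∈ S, f (e k) = e k j := by
      intro k hk
      have he : e k ∈ V := fun m hm => by
        simp [e, ne_of_mem_of_not_mem hk hm]
      calc f (e k) = (f + g) (e k) := by
            rw [LinearMap.add_apply, (Submodule.mem_dualAnnihilator g).mp hg _ he, add_zero]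
        _ = e k j := by rw [hfg]; rfl
    simp only [mem_filter, mem_singleton]
    constructor
    · rintro ⟨hk, hfk⟩
      by_contra hkj
      simp [hf_e k hk, e, hkj] at hfk
    · rintro rfl
      exact ⟨hj, by simp [hf_e _ hj, e]⟩

lemma card_filter_supp_eq_sum_mul (x y : ι → ZMod 2) :
    (((supp x).filter (fun k => y k = 1)).card : ZMod 2) = ∑ k, y k * x k := by
  rw [supp, filter_filter, card_eq_sum_ones, Nat.cast_sum, sum_filter]
  refine sum_congr rfl fun k _ => ?_
  generalize x k = a; generalize y k = b; revert a b; decide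

lemma isStoppingSet_supp {C : Submodule (ZMod 2) (ι → ZMod 2)} {c : ι → ZMod 2} (hc : c ∈ C) :
    IsStoppingSet (Hstar C) (supp c) := by
  intro y hy
  have hparity := card_filter_supp_eq_sum_mul c y
  rw [show (supp c).filter (fun k => y.1 k = 1) = (supp c).filter (fun k => Hstar C y k = 1)
    from rfl, hy, y.2 c hc] at hparity
  exact one_ne_zero (Nat.cast_one.symm.trans hparity)

lemma IsStoppingSet.exists_mem_supp [DecidableEq ι] {C : Submodule (ZMod 2) (ι → ZMod 2)}
    {S : Finset ι} (hS : IsStoppingSet (Hstar C) S) {j : ι} (hj : j ∈ S) :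
    ∃ c ∈ C, supp c ⊆ S ∧ j ∈ supp c := by
  by_contra! h
  obtain ⟨y, hy, hyS⟩ := exists_mem_dualCode_filter_eq_singleton hj
    fun c hc hcS => by simpa using h c hc hcS
  exact hS ⟨y, hy⟩ (by rw [show S.filter (fun k => Hstar C ⟨y, hy⟩ k = 1) = {j} from hyS,
    card_singleton])

lemma three_mul_le_two_mul_card [DecidableEq ι] {C : Submodule (ZMod 2) (ι → ZMod 2)} {d : ℕ}
    (hd : ∀ c ∈ C, c ≠ 0 → d ≤ wt c) {c c' : ι → ZMod 2} (hc : c ∈ C) (hc' : c' ∈ C)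
    (hc0 : c ≠ 0) (hc'0 : c' ≠ 0) (hne : c ≠ c') {S : Finset ι} (hcS : supp c ⊆ S)
    (hc'S : supp c' ⊆ S) : 3 * d ≤ 2 * S.card := by
  have hsum := wt_add_wt_add_wt_add c c'
  have hunion := card_le_card (union_subset hcS hc'S)
  have h := hd c hc hc0
  have h' := hd c' hc' hc'0
  have hadd := hd (c + c') (C.add_mem hc hc') fun h =>
    hne (by rwa [← sub_eq_zero, ZModModule.sub_eq_add])
  omega

lemma IsStoppingSet.exists_supp_eq [DecidableEq ι] {C : Submodule (ZMod 2) (ι → ZMod 2)}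
    {d : ℕ} (hd : ∀ c ∈ C, c ≠ 0 → d ≤ wt c) {S : Finset ι} (hS : IsStoppingSet (Hstar C) S)
    (hcard : S.card ≤ (3 * d + 1) / 2 - 1) : ∃ c ∈ C, supp c = S := by
  obtain rfl | ⟨j, hj⟩ := S.eq_empty_or_nonempty
  · exact ⟨0, C.zero_mem, by simp [supp]⟩
  have hpos := card_pos.mpr ⟨j, hj⟩
  obtain ⟨c, hc, hcS, hjc⟩ := hS.exists_mem_supp hj
  refine ⟨c, hc, hcS.antisymm fun j' hj' => ?_⟩
  by_contra hj'c
  obtain ⟨c', hc', hc'S, hj'c'⟩ := hS.exists_mem_supp hj'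
  have := three_mul_le_two_mul_card hd hc hc' (ne_zero_of_mem_supp hjc)
    (ne_zero_of_mem_supp hj'c') (fun h => hj'c (h ▸ hj'c')) hcS hc'S
  omega

end Binary

theorem stmt_16_general {n d : ℕ} (C : Submodule (ZMod 2) (Fin n → ZMod 2))
    (hd : ∀ c ∈ C, c ≠ 0 → d ≤ wt c) :
    ∀ i : ℕ, i ≤ min ((3 * d + 1) / 2 - 1) n →
      Set.ncard {S : Finset (Fin n) | S.card = i ∧ IsStoppingSet (Hstar C) S}
        = Set.ncard {c : Fin n → ZMod 2 | c ∈ C ∧ wt c = i} := by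
  intro i hi
  have hset : {S : Finset (Fin n) | S.card = i ∧ IsStoppingSet (Hstar C) S}
      = supp '' {c : Fin n → ZMod 2 | c ∈ C ∧ wt c = i} := by
    ext S
    constructor
    · rintro ⟨rfl, hS⟩
      obtain ⟨c, hc, rfl⟩ := hS.exists_supp_eq hd (hi.trans (min_le_left _ _))
      exact ⟨c, ⟨hc, rfl⟩, rfl⟩
    · rintro ⟨c, ⟨hc, rfl⟩, rfl⟩
      exact ⟨rfl, isStoppingSet_supp hc⟩
  rw [hset, Set.ncard_image_of_injective _ supp_injective]

/-- For the complete parity-check matrix H* of a binary [n,k,d] code, the number of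
stopping sets of size i equals the number of codewords of weight i for all
0 ≤ i ≤ min(⌈3d/2⌉ - 1, n). -/
theorem stmt_16 {n k d : ℕ} (C : Submodule (ZMod 2) (Fin n → ZMod 2))
    (hk : Module.finrank (ZMod 2) C = k)
    (hd : ∀ c ∈ C, c ≠ 0 → d ≤ wt c)
    (hex : ∃ c ∈ C, c ≠ 0 ∧ wt c = d) :
    ∀ i : ℕ, i ≤ min ((3 * d + 1) / 2 - 1) n →
      Set.ncard {S : Finset (Fin n) | S.card = i ∧ IsStoppingSet (Hstar C) S}
        = Set.ncard {c : Fin n → ZMod 2 | c ∈ C ∧ wt c = i} :=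
  stmt_16_general C hd
end
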